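/- Let R be a faithful, antipodal signed groupoid set, with maximum element ωₐ : wₐ → a of weak order at each object a. Define g^⊥ := g ω_b for g : b → a. Then g ↦ g^⊥ is an order-reversing involution of the weak order at a satisfying g ∨ g^⊥ = ωₐ, g ∧ g^⊥ = 1ₐ, and for g, h ∈ ₐG, Φ_g ∩ Φ_h = ∅ if and only if g ≤ h^⊥. Consequently, if R is complete then the weak order at each object is a complete ortholattice and R satisfies the Join Orthogonality Property. -/

import Mathlib

open CategoryTheory

universe u v

/-- A signed groupoid set: a groupoid `G` acting on a family of definitely involuted
sets `R a` (`a ∈ Ob G`), with involution `neg`, positive parts `pos a`, and the action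
commuting with the involution. -/
structure SGS (G : Type u) [Groupoid G] (R : G → Type v) where
  neg : ∀ {a : G}, R a → R a
  pos : ∀ a : G, Set (R a)
  act : ∀ {a b : G}, (b ⟶ a) → R b → R a
  neg_neg : ∀ {a : G} (x : R a), neg (neg x) = x
  pos_iff : ∀ {a : G} (x : R a), x ∈ pos a ↔ neg x ∉ pos a
  act_id : ∀ {a : G} (x : R a), act (𝟙 a) x = x
  act_comp : ∀ {a b c : G} (g : c ⟶ b) (f : b ⟶ a) (x : R c),
      act f (act g x) = act (g ≫ f) x
  act_neg : ∀ {a b : G} (f : b ⟶ a) (x : R b), act f (neg x) = neg (act f x)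

/-- The morphisms of `G` with codomain `a`. -/
abbrev SHoms (G : Type u) [Groupoid G] (a : G) : Type _ := Σ b : G, (b ⟶ a)

namespace SGS

variable {G : Type u} [Groupoid G] {R : G → Type v} (S : SGS G R)

/-- The inversion set of a morphism `f : b ⟶ a`: positive roots at `a` sent to
negative roots at `b` by `f⁻¹`. -/
def Phi {a b : G} (f : b ⟶ a) : Set (R a) :=
  {α | α ∈ S.pos a ∧ S.act (Groupoid.inv f) α ∉ S.pos b}

/-- The inversion set of an element of `SHoms G a`. -/
def PhiS {a : G} (g : SHoms G a) : Set (R a) := S.Phi g.2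

/-- `S` is faithful if only identity morphisms have empty inversion set. -/
def Faithful : Prop :=
  ∀ ⦃a b : G⦄ (f : b ⟶ a), S.Phi f = ∅ → ∃ h : b = a, f = eqToHom h

/-- `j` is an upper bound of `F` in the weak order at `a`. -/
def IsUB {a : G} (F : Set (SHoms G a)) (j : SHoms G a) : Prop :=
  ∀ g ∈ F, S.PhiS g ⊆ S.PhiS j

/-- `j` is a least upper bound of `F` in the weak order at `a`. -/
def IsLUBw {a : G} (F : Set (SHoms G a)) (j : SHoms G a) : Prop :=
  S.IsUB F j ∧ ∀ k : SHoms G a, S.IsUB F k → S.PhiS j ⊆ S.PhiS k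

/-- `S` is complete: the weak order at every object is a complete lattice
(equivalently, every family of morphisms with a common codomain has a join). -/
def Complete : Prop := ∀ (a : G) (F : Set (SHoms G a)), ∃ j : SHoms G a, S.IsLUBw F j

/-- `S` is finite: finitely many objects, morphisms and roots. -/
def FiniteSGS (_S : SGS G R) : Prop :=
  Finite G ∧ (∀ a b : G, Finite (a ⟶ b)) ∧ ∀ a : G, Finite (R a)

/-- A square `(x, w, y, z)`: a commuting square `xw = yz` with `x(Φ_w) = Φ_y`. -/
def Square {a b c d : G} (x : b ⟶ d) (w : a ⟶ b) (y : c ⟶ d) (z : a ⟶ c) : Prop :=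
  w ≫ x = z ≫ y ∧ S.act x '' S.Phi w = S.Phi y

/-- The positive real roots at `a`: the union of all inversion sets at `a`. -/
def posRe (a : G) : Set (R a) := ⋃ g : SHoms G a, S.PhiS g

/-- An atomic morphism: an atom of the weak order at its codomain. -/
def Atomic {a : G} (g : SHoms G a) : Prop :=
  S.PhiS g ≠ ∅ ∧ ∀ h : SHoms G a, S.PhiS h ⊆ S.PhiS g →
    S.PhiS h = ∅ ∨ S.PhiS h = S.PhiS g

/-- A simple morphism: one whose inversion set is a singleton. -/
def Simple {a b : G} (f : b ⟶ a) : Prop := ∃ α : R a, S.Phi f = {α}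

/-- Interval finiteness: every interval `[1ₐ, g]` of a weak order is finite. -/
def IntervalFinite : Prop :=
  ∀ (a : G) (g : SHoms G a), {h : SHoms G a | S.PhiS h ⊆ S.PhiS g}.Finite

/-- Preprincipal: interval finite, and the inversion set of an atomic morphism is
contained in, or disjoint from, any other inversion set at the same object. -/
def Preprincipal : Prop :=
  S.IntervalFinite ∧ ∀ (a : G) (s g : SHoms G a), S.Atomic s →
    S.PhiS s ⊆ S.PhiS g ∨ S.PhiS s ∩ S.PhiS g = ∅

/-- Antipodal: the weak order at each object has a maximum element. -/
def Antipodal : Prop :=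
  ∀ a : G, ∃ ω : SHoms G a, ∀ g : SHoms G a, S.PhiS g ⊆ S.PhiS ω

end SGS

/-- The orthocomplement `g ↦ g^⊥ := g ∘ ω_{dom g}` determined by a choice of maxima
`ω a` of the weak orders. For `g : b ⟶ a`, `g^⊥ = ω_b ≫ g : w_b ⟶ a`. -/
def SGSperp {G : Type u} [Groupoid G] (ω : ∀ a : G, SHoms G a) {a : G}
    (g : SHoms G a) : SHoms G a :=
  ⟨(ω g.1).1, (ω g.1).2 ≫ g.2⟩

/-! For `g : b ⟶ a` the orthocomplement `g^⊥ = g ω_b` inverts exactly the positive real roots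
that `g` does not: `Φ_{g^⊥} = Φ⁺_re(a) \ Φ_g`, because `Φ_{ω_b}` is all of `Φ⁺_re(b)` and `g⁻¹`
matches the positive real roots at `a` outside `Φ_g` with positive real roots at `b`. The
order-theoretic claims then become identities between subsets of `Φ⁺_re(a)`; only `g^⊥⊥ = g`
needs faithfulness, applied to `Φ_{ω_b ω_{w_b}} = ∅`. -/

theorem CategoryTheory.Groupoid.inv_inv {G : Type u} [Groupoid G] {a b : G} (f : b ⟶ a) :
    Groupoid.inv (Groupoid.inv f) = f := by
  simp [Groupoid.inv_eq_inv]

namespace SGS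

variable {G : Type u} [Groupoid G] {R : G → Type v} (S : SGS G R)

lemma act_inv_comp {a b c : G} (u : c ⟶ b) (v : b ⟶ a) (x : R a) :
    S.act (Groupoid.inv (u ≫ v)) x = S.act (Groupoid.inv u) (S.act (Groupoid.inv v) x) := by
  rw [S.act_comp]
  simp [Groupoid.inv_eq_inv]

lemma act_act_inv {a b : G} (f : b ⟶ a) (x : R a) :
    S.act f (S.act (Groupoid.inv f) x) = x := by
  rw [S.act_comp, Groupoid.inv_comp, S.act_id]

lemma neg_mem_pos_iff {a : G} (x : R a) : S.neg x ∈ S.pos a ↔ x ∉ S.pos a := by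
  rw [S.pos_iff, S.neg_neg]

lemma mem_phi_comp_iff {a b c : G} (u : c ⟶ b) (v : b ⟶ a) (α : R a) :
    α ∈ S.Phi (u ≫ v) ↔
      α ∈ S.pos a ∧ S.act (Groupoid.inv u) (S.act (Groupoid.inv v) α) ∉ S.pos c := by
  rw [Phi, Set.mem_ofPred_eq, act_inv_comp]

lemma phi_subset_pos {a b : G} (f : b ⟶ a) : S.Phi f ⊆ S.pos a := fun _ h => h.1

lemma phi_subset_posRe {a b : G} (f : b ⟶ a) : S.Phi f ⊆ S.posRe a :=
  fun _ h => Set.mem_iUnion.mpr ⟨⟨b, f⟩, h⟩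

lemma phiS_subset_posRe {a : G} (g : SHoms G a) : S.PhiS g ⊆ S.posRe a :=
  S.phi_subset_posRe g.2

lemma posRe_subset_pos (a : G) : S.posRe a ⊆ S.pos a :=
  Set.iUnion_subset fun g => S.phi_subset_pos g.2

lemma act_inv_mem_posRe_iff {a b : G} (f : b ⟶ a) {α : R a} (hα : α ∈ S.pos a)
    (hfα : S.act (Groupoid.inv f) α ∈ S.pos b) :
    S.act (Groupoid.inv f) α ∈ S.posRe b ↔ α ∈ S.posRe a := by
  constructor
  · intro hβ
    obtain ⟨⟨c, h⟩, -, hh⟩ := Set.mem_iUnion.mp hβ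
    exact S.phi_subset_posRe (h ≫ f) ((S.mem_phi_comp_iff h f α).mpr ⟨hα, hh⟩)
  · intro hα'
    obtain ⟨⟨c, h⟩, -, hh⟩ := Set.mem_iUnion.mp hα'
    refine S.phi_subset_posRe (h ≫ Groupoid.inv f) ((S.mem_phi_comp_iff _ _ _).mpr ⟨hfα, ?_⟩)
    rwa [Groupoid.inv_inv, S.act_act_inv]

lemma neg_act_inv_mem_phi_inv {a b : G} (f : b ⟶ a) {α : R a} (hα : α ∈ S.Phi f) :
    S.neg (S.act (Groupoid.inv f) α) ∈ S.Phi (Groupoid.inv f) := by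
  refine ⟨(S.neg_mem_pos_iff _).mpr hα.2, ?_⟩
  rw [Groupoid.inv_inv, S.act_neg, S.act_act_inv, S.neg_mem_pos_iff, not_not]
  exact hα.1

theorem phi_comp_of_phi_eq_posRe {a b c : G} {w : c ⟶ b} (hw : S.Phi w = S.posRe b)
    (g : b ⟶ a) : S.Phi (w ≫ g) = S.posRe a \ S.Phi g := by
  ext α
  by_cases hα : α ∈ S.pos a
  swap
  · exact iff_of_false (fun h => hα h.1) (fun h => hα (S.posRe_subset_pos a h.1))
  by_cases hgα : S.act (Groupoid.inv g) α ∈ S.pos b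
  · have hαg : α ∉ S.Phi g := fun h => h.2 hgα
    rw [S.mem_phi_comp_iff, Set.mem_sdiff, ← S.act_inv_mem_posRe_iff g hα hgα, ← hw]
    exact ⟨fun h => ⟨⟨hgα, h.2⟩, hαg⟩, fun h => ⟨hα, h.1.2⟩⟩
  · have hαg : α ∈ S.Phi g := ⟨hα, hgα⟩
    -- `-g⁻¹α ∈ Φ_{g⁻¹} ⊆ Φ_w`, so `w⁻¹` sends `g⁻¹α` to a positive root
    have hneg : S.neg (S.act (Groupoid.inv g) α) ∈ S.Phi w :=
      hw ▸ S.phi_subset_posRe _ (S.neg_act_inv_mem_phi_inv g hαg)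
    have hpos := hneg.2
    rw [S.act_neg, S.neg_mem_pos_iff, not_not] at hpos
    exact iff_of_false (fun h => ((S.mem_phi_comp_iff w g α).mp h).2 hpos)
      (fun h => h.2 hαg)

theorem Faithful.sigma_mk_comp_eq {S : SGS G R} (hfa : S.Faithful) {a b c : G} {f : c ⟶ b}
    (hf : S.Phi f = ∅) (g : b ⟶ a) : (⟨c, f ≫ g⟩ : SHoms G a) = ⟨b, g⟩ := by
  obtain ⟨rfl, rfl⟩ := hfa f hf
  simp

section Perp

variable {S} {ω : ∀ a : G, SHoms G a}
  (hmax : ∀ (a : G) (g : SHoms G a), S.PhiS g ⊆ S.PhiS (ω a))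
include hmax

theorem phiS_max_eq_posRe (a : G) : S.PhiS (ω a) = S.posRe a :=
  (S.phiS_subset_posRe _).antisymm (Set.iUnion_subset (hmax a))

theorem phiS_perp {a : G} (g : SHoms G a) :
    S.PhiS (SGSperp ω g) = S.posRe a \ S.PhiS g :=
  S.phi_comp_of_phi_eq_posRe (phiS_max_eq_posRe hmax g.1) g.2

theorem perp_perp (hfa : S.Faithful) {a : G} (g : SHoms G a) :
    SGSperp ω (SGSperp ω g) = g := by
  have hωω : S.PhiS (SGSperp ω (ω g.1)) = ∅ := by
    rw [phiS_perp hmax, phiS_max_eq_posRe hmax, Set.sdiff_self]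
  show (⟨_, (ω (ω g.1).1).2 ≫ (ω g.1).2 ≫ g.2⟩ : SHoms G a) = g
  rw [← Category.assoc]
  exact hfa.sigma_mk_comp_eq hωω g.2

theorem inter_phiS_eq_empty_iff_subset_perp {a : G} (g h : SHoms G a) :
    S.PhiS g ∩ S.PhiS h = ∅ ↔ S.PhiS g ⊆ S.PhiS (SGSperp ω h) := by
  rw [phiS_perp hmax, Set.subset_sdiff, ← Set.disjoint_iff_inter_eq_empty]
  exact (and_iff_right (S.phiS_subset_posRe g)).symm

end Perp

end SGS

/-- for a faithful antipodal signed groupoid set with maxima `ωₐ`, the map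
`g ↦ g^⊥ = g ω_b` is an order-reversing involution of the weak order at `a` with
`g ∨ g^⊥ = ωₐ`, `g ∧ g^⊥ = 1ₐ`, and `Φ_g ∩ Φ_h = ∅ ↔ g ≤ h^⊥`; consequently, if the
signed groupoid set is complete, each weak order is a complete ortholattice and the
Join Orthogonality Property holds. -/
theorem stmt_13 {G : Type u} [Groupoid G] {R : G → Type v} (S : SGS G R)
    (hfa : S.Faithful) (ω : ∀ a : G, SHoms G a)
    (hmax : ∀ (a : G) (g : SHoms G a), S.PhiS g ⊆ S.PhiS (ω a)) :
    (∀ (a : G) (g h : SHoms G a),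
        S.PhiS g ⊆ S.PhiS h → S.PhiS (SGSperp ω h) ⊆ S.PhiS (SGSperp ω g)) ∧
    (∀ (a : G) (g : SHoms G a), SGSperp ω (SGSperp ω g) = g) ∧
    (∀ (a : G) (g : SHoms G a), S.PhiS g ∪ S.PhiS (SGSperp ω g) = S.PhiS (ω a)) ∧
    (∀ (a : G) (g : SHoms G a), S.PhiS g ∩ S.PhiS (SGSperp ω g) = ∅) ∧
    (∀ (a : G) (g h : SHoms G a),
        S.PhiS g ∩ S.PhiS h = ∅ ↔ S.PhiS g ⊆ S.PhiS (SGSperp ω h)) ∧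
    (S.Complete →
      ∀ (a : G) (F : Set (SHoms G a)) (h j : SHoms G a),
        (∀ g ∈ F, S.PhiS g ∩ S.PhiS h = ∅) → S.IsLUBw F j →
          S.PhiS j ∩ S.PhiS h = ∅) := by
  have hdisj := fun {a : G} => SGS.inter_phiS_eq_empty_iff_subset_perp (a := a) hmax
  refine ⟨fun a g h hgh => ?_, fun a g => SGS.perp_perp hmax hfa g, fun a g => ?_,
    fun a g => ?_, fun _ => hdisj, fun _ a F h j hF hj => ?_⟩
  · rw [SGS.phiS_perp hmax, SGS.phiS_perp hmax]
    exact Set.sdiff_subset_sdiff_right hgh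
  · rw [SGS.phiS_perp hmax, Set.union_sdiff_cancel (S.phiS_subset_posRe g),
      SGS.phiS_max_eq_posRe hmax]
  · rw [SGS.phiS_perp hmax, Set.inter_sdiff_self]
  · rw [hdisj]
    exact hj.2 _ fun g hg => (hdisj g h).mp (hF g hg)
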